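/- arXiv:2505.23760 — 3 statements merged into one kernel-verified Lean document; each statement's English description precedes it below -/
import Mathlib

section
/- Let S be a real matrix with rank k ≥ 2 and singular values σ_1 ≥ ... ≥ σ_k > 0 satisfying σ_1 > σ_k. Define R'_ill = (1/2)·σ_k² − (1/(2k))·Σ_{i=1}^k σ_i². Then 1/κ(S) ≤ exp((k/(k−1))·σ_1^{−2}·R'_ill), where κ(S) = σ_1/σ_k. -/
open Matrix Finset

/-- For a real matrix `S` of rank `k ≥ 2` with singular values
`σ_1 ≥ ⋯ ≥ σ_k > 0` (via a compact SVD) and `σ_1 > σ_k`, setting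
`R'_ill = (1/2)·σ_k² − (1/(2k))·Σ σ_i²`, we have
`1/κ(S) ≤ exp((k/(k−1))·σ_1⁻²·R'_ill)` where `κ(S) = σ_1/σ_k`. -/
theorem stmt_5 (pr pc k : ℕ) (hk : 2 ≤ k)
    (S : Matrix (Fin pr) (Fin pc) ℝ)
    (U : Matrix (Fin pr) (Fin k) ℝ) (V : Matrix (Fin pc) (Fin k) ℝ)
    (σ : Fin k → ℝ)
    (hU : Uᵀ * U = 1) (hV : Vᵀ * V = 1)
    (hrank : S.rank = k)
    (hSVD : S = U * Matrix.diagonal σ * Vᵀ)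
    (hpos : ∀ i, 0 < σ i) (hmono : Antitone σ)
    (hgap : σ ⟨k - 1, by omega⟩ < σ ⟨0, by omega⟩) :
    1 / (σ ⟨0, by omega⟩ / σ ⟨k - 1, by omega⟩)
      ≤ Real.exp (((k : ℝ) / ((k : ℝ) - 1)) * (σ ⟨0, by omega⟩) ^ (-2 : ℤ) *
          ((1 / 2) * (σ ⟨k - 1, by omega⟩) ^ 2 - (1 / (2 * (k : ℝ))) * ∑ i, (σ i) ^ 2)) := by
  set a := σ ⟨0, by omega⟩ with ha
  set b := σ ⟨k - 1, by omega⟩ with hb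
  have hb0 : 0 < b := hpos _
  have ha0 : 0 < a := hpos _
  have hab : b < a := hgap
  have hk1 : (1 : ℝ) < (k : ℝ) := by exact_mod_cast hk.trans_lt' one_lt_two
  -- bound the sum
  have hlast : (⟨k - 1, by omega⟩ : Fin k) ∈ Finset.univ := Finset.mem_univ _
  have hsum : ∑ i, (σ i) ^ 2 ≤ b ^ 2 + ((k : ℝ) - 1) * a ^ 2 := by
    rw [← Finset.sum_erase_add _ _ hlast]
    have h1 : ∑ i ∈ Finset.univ.erase (⟨k - 1, by omega⟩ : Fin k), (σ i) ^ 2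
        ≤ ∑ _i ∈ Finset.univ.erase (⟨k - 1, by omega⟩ : Fin k), a ^ 2 := by
      apply Finset.sum_le_sum
      intro i _
      have hle : σ i ≤ a := hmono (show (⟨0, by omega⟩ : Fin k) ≤ i by
        simp [Fin.le_def])
      nlinarith [hpos i]
    have hcard : (Finset.univ.erase (⟨k - 1, by omega⟩ : Fin k)).card = k - 1 := by
      rw [Finset.card_erase_of_mem hlast, Finset.card_univ, Fintype.card_fin]
    rw [Finset.sum_const, hcard] at h1
    have : ((k - 1 : ℕ) : ℝ) = (k : ℝ) - 1 := by
      push_cast [Nat.cast_sub (by omega : 1 ≤ k)]; ring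
    rw [nsmul_eq_mul, this] at h1
    linarith
  -- log inequality
  have hx0 : 0 < b / a := div_pos hb0 ha0
  have hlog : Real.log (b / a) ≤ ((b / a) ^ 2 - 1) / 2 := by
    have ht : Real.log ((b / a) ^ 2) ≤ (b / a) ^ 2 - 1 :=
      Real.log_le_sub_one_of_pos (by positivity)
    rw [Real.log_pow] at ht
    push_cast at ht
    linarith
  -- the exponent is at least ((b/a)^2 - 1)/2
  have hexp : ((b / a) ^ 2 - 1) / 2
      ≤ ((k : ℝ) / ((k : ℝ) - 1)) * a ^ (-2 : ℤ) *
        ((1 / 2) * b ^ 2 - (1 / (2 * (k : ℝ))) * ∑ i, (σ i) ^ 2) := by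
    have hk1' : (0:ℝ) < (k:ℝ) - 1 := by linarith
    have hkpos : (0:ℝ) < (k:ℝ) := by linarith
    have hz : (a : ℝ) ^ (-2 : ℤ) = 1 / a ^ 2 := by
      rw [_root_.zpow_neg]
      norm_num
    rw [hz]
    have h2 : (1 / (2 * (k:ℝ))) * ∑ i, (σ i) ^ 2
        ≤ (1 / (2 * (k:ℝ))) * (b ^ 2 + ((k:ℝ) - 1) * a ^ 2) :=
      mul_le_mul_of_nonneg_left hsum (by positivity)
    have heq : ((k:ℝ) - 1) / (2 * k) * (b ^ 2 - a ^ 2)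
        = (1 / 2) * b ^ 2 - (1 / (2 * (k:ℝ))) * (b ^ 2 + ((k:ℝ) - 1) * a ^ 2) := by
      field_simp
      ring
    have hinner : ((k:ℝ) - 1) / (2 * k) * (b ^ 2 - a ^ 2)
        ≤ (1 / 2) * b ^ 2 - (1 / (2 * (k:ℝ))) * ∑ i, (σ i) ^ 2 := by
      rw [heq]; linarith
    have hc : (0:ℝ) ≤ (k:ℝ) / ((k:ℝ) - 1) * (1 / a ^ 2) := by positivity
    calc ((b / a) ^ 2 - 1) / 2
        = (k:ℝ) / ((k:ℝ) - 1) * (1 / a ^ 2) * (((k:ℝ) - 1) / (2 * k) * (b ^ 2 - a ^ 2)) := by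
          field_simp
      _ ≤ (k:ℝ) / ((k:ℝ) - 1) * (1 / a ^ 2) *
            ((1 / 2) * b ^ 2 - (1 / (2 * (k:ℝ))) * ∑ i, (σ i) ^ 2) :=
          mul_le_mul_of_nonneg_left hinner hc
  calc 1 / (a / b) = b / a := by rw [one_div_div]
    _ = Real.exp (Real.log (b / a)) := (Real.exp_log hx0).symm
    _ ≤ Real.exp _ := Real.exp_le_exp.mpr (hlog.trans hexp)
end

section
/- Let S = U·Diag(σ)·Vᵀ be a compact SVD of a real matrix S of rank k ≥ 2 with singular values σ_1 ≥ ... ≥ σ_{k−1} > σ_k > 0 (so σ_k is strictly the unique minimum). Let R' = (1/2)·σ_k² − (1/(2k))·Σ σ_i² and G = (σ_k·u_k·v_kᵀ − (1/k)·S)/R'², and set S' = S − η·G for step size 0 < η < (k/(k−1))·R'². Then the singular values of S' are σ'_i = (1 + η/(k·R'²))·σ_i for i < k and σ'_k = (1 + η/(k·R'²) − η/R'²)·σ_k, all positive, with σ'_1 maximal and σ'_k minimal. -/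
/-!
Since `uₖ vₖᵀ = U diag(eₖ) Vᵀ`, the gradient `G` is diagonal in the singular bases of `S`, so
`S - ηG = U diag(σ') Vᵀ` where `σ'` rescales `σₖ` by `β = 1 + η/(kR'²) - η/R'²` and every other
`σᵢ` by `α = 1 + η/(kR'²)`. The step-size bound is exactly `β > 0` (note `R' < 0`, as `σₖ²` lies
below the mean of the `σᵢ²`), and since `β ≤ α` and `σₖ` is the smallest singular value, the
rescaling keeps `σ'₁` maximal and `σ'ₖ` minimal.
-/

open Matrix Finset

def splitScale {ι R : Type*} [DecidableEq ι] [Mul R] (m : ι) (α β : R) (σ : ι → R) : ι → R :=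
  fun l => if l = m then β * σ l else α * σ l

section splitScale

variable {ι : Type*} [DecidableEq ι] {m : ι} {α β : ℝ} {σ : ι → ℝ}

theorem splitScale_pos (hα : 0 < α) (hβ : 0 < β) (hσ : ∀ i, 0 < σ i) (i : ι) :
    0 < splitScale m α β σ i := by
  unfold splitScale
  split_ifs
  exacts [mul_pos hβ (hσ i), mul_pos hα (hσ i)]

theorem splitScale_le_of_ne (hβα : β ≤ α) (hα : 0 ≤ α) (hσ : ∀ i, 0 ≤ σ i) {i j : ι}
    (hj : j ≠ m) (hij : σ i ≤ σ j) : splitScale m α β σ i ≤ splitScale m α β σ j := by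
  unfold splitScale
  rw [if_neg hj]
  split_ifs
  · nlinarith [hσ i]
  · exact mul_le_mul_of_nonneg_left hij hα

theorem splitScale_self_le (hβα : β ≤ α) (hα : 0 ≤ α) (hσ : 0 ≤ σ m) {i : ι}
    (hmi : σ m ≤ σ i) : splitScale m α β σ m ≤ splitScale m α β σ i := by
  unfold splitScale
  rw [if_pos rfl]
  split_ifs with hi
  · subst hi; rfl
  · nlinarith

end splitScale

theorem vecMulVec_col_eq_mul_diagonal_single_mul_transpose {R ι κ ρ : Type*} [CommSemiring R]
    [Fintype ρ] [DecidableEq ρ] (U : Matrix ι ρ R) (V : Matrix κ ρ R) (m : ρ) :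
    vecMulVec (fun i => U i m) (fun j => V j m) = U * diagonal (Pi.single m (1 : R)) * Vᵀ := by
  ext i j
  simp [mul_apply, diagonal, vecMulVec_apply, Pi.single_apply]

theorem mul_diagonal_mul_transpose_sub_smul {R ι κ ρ : Type*} [CommRing R]
    [Fintype ρ] [DecidableEq ρ] (U : Matrix ι ρ R) (V : Matrix κ ρ R) (σ : ρ → R) (m : ρ)
    (t c : R) :
    U * diagonal σ * Vᵀ - t • (σ m • vecMulVec (fun i => U i m) (fun j => V j m)
        - c • (U * diagonal σ * Vᵀ))
      = U * diagonal (splitScale m (1 + t * c) (1 + t * c - t) σ) * Vᵀ := by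
  have hσ' : splitScale m (1 + t * c) (1 + t * c - t) σ
      = σ - t • (σ m • Pi.single m 1 - c • σ) := by
    ext l
    by_cases hl : l = m
    · subst hl; simp [splitScale]; ring
    · simp [splitScale, hl]; ring
  have hdiag (a b : ρ → R) : diagonal (a - b) = diagonal a - diagonal b := (diagonal_sub a b).symm
  rw [vecMulVec_col_eq_mul_diagonal_single_mul_transpose, hσ']
  simp only [hdiag, diagonal_smul, Matrix.mul_sub, Matrix.sub_mul, Matrix.mul_smul,
    Matrix.smul_mul]

theorem card_mul_sq_lt_sum_sq {ι : Type*} [Fintype ι] {σ : ι → ℝ} {m i₀ : ι} (hi₀ : i₀ ≠ m)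
    (hm : 0 ≤ σ m) (hmin : ∀ i, i ≠ m → σ m < σ i) :
    Fintype.card ι * σ m ^ 2 < ∑ i, σ i ^ 2 := by
  have hle : ∀ i ∈ univ, σ m ^ 2 ≤ σ i ^ 2 := fun i _ => by
    by_cases hi : i = m
    · rw [hi]
    · exact pow_le_pow_left₀ hm (hmin i hi).le 2
  have hlt : σ m ^ 2 < σ i₀ ^ 2 := pow_lt_pow_left₀ (hmin i₀ hi₀) hm two_ne_zero
  simpa using sum_lt_sum hle ⟨i₀, mem_univ _, hlt⟩

theorem half_sq_sub_div_sum_sq_neg {ι : Type*} [Fintype ι] {σ : ι → ℝ} {m i₀ : ι}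
    (hi₀ : i₀ ≠ m) (hm : 0 ≤ σ m) (hmin : ∀ i, i ≠ m → σ m < σ i) :
    1 / 2 * σ m ^ 2 - 1 / (2 * (Fintype.card ι : ℝ)) * ∑ i, σ i ^ 2 < 0 := by
  have hcard : (0 : ℝ) < Fintype.card ι := by
    exact_mod_cast Fintype.card_pos_iff.mpr ⟨m⟩
  have h := card_mul_sq_lt_sum_sq hi₀ hm hmin
  have heq : 1 / 2 * σ m ^ 2 - 1 / (2 * (Fintype.card ι : ℝ)) * ∑ i, σ i ^ 2
      = (Fintype.card ι * σ m ^ 2 - ∑ i, σ i ^ 2) / (2 * Fintype.card ι) := by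
    field_simp
  rw [heq]
  exact div_neg_of_neg_of_pos (by linarith) (by positivity)

theorem one_add_div_mul_sub_div_pos {k r η : ℝ} (hk : 1 < k) (hr : 0 < r)
    (hη : η < k / (k - 1) * r) : 0 < 1 + η / (k * r) - η / r := by
  rw [div_mul_eq_mul_div, lt_div_iff₀ (by linarith)] at hη
  have : 1 + η / (k * r) - η / r = (k * r - (k - 1) * η) / (k * r) := by
    field_simp; ring
  rw [this]
  exact div_pos (by linarith) (by positivity)

/-- Let `S = U·Diag(σ)·Vᵀ` be a compact SVD of a rank-`k` (`k ≥ 2`) real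
matrix with `σ_1 ≥ ⋯ ≥ σ_{k−1} > σ_k > 0` (the minimum singular value unique).
With `R' = (1/2)σ_k² − (1/(2k))Σσ_i²`, `G = (σ_k·u_k v_kᵀ − (1/k)·S)/R'²` and
`S' = S − η·G` for `0 < η < (k/(k−1))·R'²`, the matrix `S'` has singular values
`σ'_i = (1 + η/(kR'²))·σ_i` for `i < k` and `σ'_k = (1 + η/(kR'²) − η/R'²)·σ_k`,
all positive, with `σ'_1` maximal and `σ'_k` minimal. -/
theorem stmt_7 (pr pc k : ℕ) (hk : 2 ≤ k)
    (S : Matrix (Fin pr) (Fin pc) ℝ)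
    (U : Matrix (Fin pr) (Fin k) ℝ) (V : Matrix (Fin pc) (Fin k) ℝ)
    (σ : Fin k → ℝ)
    (hSVD : S = U * Matrix.diagonal σ * Vᵀ)
    (hpos : ∀ i, 0 < σ i) (hmono : Antitone σ)
    (hmin : ∀ i : Fin k, i ≠ ⟨k - 1, by omega⟩ → σ ⟨k - 1, by omega⟩ < σ i)
    (R' : ℝ)
    (hR' : R' = (1 / 2) * (σ ⟨k - 1, by omega⟩) ^ 2 - (1 / (2 * (k : ℝ))) * ∑ i, (σ i) ^ 2)
    (G : Matrix (Fin pr) (Fin pc) ℝ)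
    (hG : G = (R' ^ 2)⁻¹ •
      (σ ⟨k - 1, by omega⟩ •
          Matrix.vecMulVec (fun i => U i ⟨k - 1, by omega⟩) (fun j => V j ⟨k - 1, by omega⟩)
        - ((k : ℝ))⁻¹ • S))
    (η : ℝ) (hη0 : 0 < η) (hη1 : η < ((k : ℝ) / ((k : ℝ) - 1)) * R' ^ 2) :
    ∃ σ' : Fin k → ℝ,
      (∀ i : Fin k, σ' i =
          if i = ⟨k - 1, by omega⟩ then
            (1 + η / ((k : ℝ) * R' ^ 2) - η / R' ^ 2) * σ i
          else (1 + η / ((k : ℝ) * R' ^ 2)) * σ i) ∧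
      S - η • G = U * Matrix.diagonal σ' * Vᵀ ∧
      (∀ i, 0 < σ' i) ∧
      (∀ i, σ' i ≤ σ' ⟨0, by omega⟩) ∧
      (∀ i, σ' ⟨k - 1, by omega⟩ ≤ σ' i) := by
  set m : Fin k := ⟨k - 1, by omega⟩
  have hm0 : (⟨0, by omega⟩ : Fin k) ≠ m := by simp [m, Fin.ext_iff]; omega
  have hk1 : (1 : ℝ) < k := by exact_mod_cast hk
  have hR'neg : R' < 0 := by
    simpa [hR'] using half_sq_sub_div_sum_sq_neg hm0 (hpos m).le hmin
  have hR2 : 0 < R' ^ 2 := by nlinarith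
  have hb : 0 ≤ η / R' ^ 2 := by positivity
  have hα : 0 < 1 + η / (k * R' ^ 2) := by positivity
  have hβ := one_add_div_mul_sub_div_pos hk1 hR2 hη1
  refine ⟨splitScale m (1 + η / (k * R' ^ 2)) (1 + η / (k * R' ^ 2) - η / R' ^ 2) σ,
    fun i => rfl, ?_, splitScale_pos hα hβ hpos,
    fun i => splitScale_le_of_ne (by linarith) hα.le (fun i => (hpos i).le) hm0
      (hmono (Fin.mk_le_mk.mpr (Nat.zero_le _))),
    fun i => splitScale_self_le (by linarith) hα.le (hpos m).le ?_⟩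
  · have hcoeff : η / (k * R' ^ 2) = η * (R' ^ 2)⁻¹ * (k : ℝ)⁻¹ := by
      field_simp
    rw [hG, hSVD, smul_smul, mul_diagonal_mul_transpose_sub_smul, hcoeff, div_eq_mul_inv η]
  · by_cases hi : i = m
    · rw [hi]
    · exact (hmin i hi).le
end

section
/- Let H = θᵀKθ where K ∈ ℝ^{d×d} is symmetric positive definite and θ ∈ ℝ^{d×d}, with compact SVD H = V·Diag(σ)·Vᵀ (V with orthonormal columns). Suppose the largest singular value σ_1 of H is unique. Define G = 2Kθ(σ_1·v_1·v_1ᵀ − (1/d)·H) and update θ' = θ − η·K^{−1}·G for η > 0. Then θ'ᵀKθ' = V·Diag(σ')·Vᵀ, where σ'_1 = σ_1 − 4η(1−1/d)σ_1² + 4η²(1−1/d)²σ_1³ and σ'_i = σ_i + (4η/d)σ_i² + (4η²/d²)σ_i³ for i > 1. -/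
open Matrix Finset

set_option maxHeartbeats 1000000

/-- Let `H = θᵀKθ` with `K` symmetric positive definite, with compact SVD
`H = V·Diag(σ)·Vᵀ` (`V` with orthonormal columns) and the largest singular value `σ_1`
unique. With `G = 2Kθ(σ_1 v_1 v_1ᵀ − (1/d)H)` and `θ' = θ − η K⁻¹ G` for `η > 0`, one has
`θ'ᵀKθ' = V·Diag(σ')·Vᵀ` with `σ'_1 = σ_1 − 4η(1−1/d)σ_1² + 4η²(1−1/d)²σ_1³` and
`σ'_i = σ_i + (4η/d)σ_i² + (4η²/d²)σ_i³` for `i > 1`. -/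
theorem stmt_13 (d k : ℕ) (hk : 1 ≤ k)
    (K θ : Matrix (Fin d) (Fin d) ℝ)
    (hK : K.PosDef)
    (V : Matrix (Fin d) (Fin k) ℝ) (σ : Fin k → ℝ)
    (hV : Vᵀ * V = 1)
    (hSVD : θᵀ * K * θ = V * Matrix.diagonal σ * Vᵀ)
    (hpos : ∀ i, 0 < σ i) (hmono : Antitone σ)
    (hmax : ∀ i : Fin k, i ≠ ⟨0, by omega⟩ → σ i < σ ⟨0, by omega⟩)
    (G : Matrix (Fin d) (Fin d) ℝ)
    (hG : G = (2 : ℝ) • (K * θ *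
      (σ ⟨0, by omega⟩ • Matrix.vecMulVec (fun i => V i ⟨0, by omega⟩)
          (fun j => V j ⟨0, by omega⟩)
        - ((d : ℝ))⁻¹ • (θᵀ * K * θ))))
    (η : ℝ) (hη : 0 < η) :
    (θ - η • (K⁻¹ * G))ᵀ * K * (θ - η • (K⁻¹ * G)) =
      V * Matrix.diagonal (fun i =>
        if i = (⟨0, by omega⟩ : Fin k) then
          σ i - 4 * η * (1 - 1 / (d : ℝ)) * (σ i) ^ 2
            + 4 * η ^ 2 * (1 - 1 / (d : ℝ)) ^ 2 * (σ i) ^ 3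
        else
          σ i + (4 * η / (d : ℝ)) * (σ i) ^ 2
            + (4 * η ^ 2 / (d : ℝ) ^ 2) * (σ i) ^ 3) * Vᵀ := by
  classical
  set z : Fin k := ⟨0, by omega⟩ with hz
  have hdet : IsUnit K.det := isUnit_iff_ne_zero.mpr hK.det_pos.ne'
  have hKinv : K⁻¹ * K = 1 := Matrix.nonsing_inv_mul K hdet
  -- the diagonal core of the matrix M = σ₁ v₁v₁ᵀ − (1/d) H
  set n : Fin k → ℝ := fun i => (if i = z then σ z else 0) - σ i * (d : ℝ)⁻¹ with hn
  set N : Matrix (Fin k) (Fin k) ℝ := Matrix.diagonal n with hNdef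
  set W : Matrix (Fin d) (Fin d) ℝ := V * N * Vᵀ with hWdef
  set E : Matrix (Fin k) (Fin k) ℝ :=
    Matrix.diagonal (fun i => if i = z then (1 : ℝ) else 0) with hE
  have hvv : Matrix.vecMulVec (fun i => V i z) (fun j => V j z) = V * E * Vᵀ := by
    ext i j
    simp [Matrix.vecMulVec_apply, Matrix.mul_apply, Matrix.transpose_apply, hE,
      Matrix.diagonal_apply, mul_ite, ite_mul, Finset.sum_ite_eq', Finset.sum_ite_eq]
  have hNsum : σ z • E - (d : ℝ)⁻¹ • Matrix.diagonal σ = N := by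
    ext i j
    by_cases h : i = j
    · subst h
      simp [hE, hNdef, hn, Matrix.diagonal_apply, mul_comm]
    · simp [hE, hNdef, Matrix.diagonal_apply, h]
  have hM : σ z • Matrix.vecMulVec (fun i => V i z) (fun j => V j z)
      - (d : ℝ)⁻¹ • (θᵀ * K * θ) = W := by
    rw [hSVD, hvv, hWdef, ← hNsum]
    simp only [Matrix.sub_mul, Matrix.mul_sub, Matrix.smul_mul, Matrix.mul_smul,
      Matrix.mul_assoc]
  -- rewrite the update
  have hupd : θ - η • (K⁻¹ * G) = θ - (2 * η) • (θ * W) := by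
    rw [hG, hM]
    have h1 : K⁻¹ * ((2 : ℝ) • (K * θ * W)) = (2 : ℝ) • (θ * W) := by
      rw [Matrix.mul_smul]
      congr 1
      calc K⁻¹ * (K * θ * W) = (K⁻¹ * K) * (θ * W) := by
            simp only [Matrix.mul_assoc]
          _ = θ * W := by rw [hKinv, Matrix.one_mul]
    rw [h1, smul_smul, mul_comm]
  have hcollapse : ∀ A B : Matrix (Fin k) (Fin k) ℝ,
      (V * A * Vᵀ) * (V * B * Vᵀ) = V * (A * B) * Vᵀ := by
    intro A B
    calc (V * A * Vᵀ) * (V * B * Vᵀ) = V * A * (Vᵀ * V) * B * Vᵀ := by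
          simp only [Matrix.mul_assoc]
        _ = V * (A * B) * Vᵀ := by rw [hV]; simp only [Matrix.mul_one, Matrix.mul_assoc]
  set c : ℝ := 2 * η with hc
  set D : Matrix (Fin k) (Fin k) ℝ := Matrix.diagonal σ with hD
  have hWt : Wᵀ = W := by
    rw [hWdef]
    simp [Matrix.transpose_mul, hNdef, Matrix.diagonal_transpose, Matrix.mul_assoc]
  -- expand the quadratic form
  have hθW : (θ * W)ᵀ * K * (θ * W) = W * (V * D * Vᵀ) * W := by
    rw [Matrix.transpose_mul, hWt]
    calc W * θᵀ * K * (θ * W) = W * (θᵀ * K * θ) * W := by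
          simp only [Matrix.mul_assoc]
        _ = W * (V * D * Vᵀ) * W := by rw [hSVD]
  have key : (θ - c • (θ * W))ᵀ * K * (θ - c • (θ * W)) =
      V * (D - c • (N * D) - c • (D * N) + (c * c) • (N * (D * N))) * Vᵀ := by
    have expand : (θ - c • (θ * W))ᵀ * K * (θ - c • (θ * W)) =
        (θᵀ * K * θ) - c • ((θ * W)ᵀ * K * θ) - c • (θᵀ * K * (θ * W))
          + (c * c) • ((θ * W)ᵀ * K * (θ * W)) := by
      simp only [Matrix.transpose_sub, Matrix.transpose_smul, Matrix.sub_mul,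
        Matrix.mul_sub, Matrix.smul_mul, Matrix.mul_smul, smul_smul, smul_sub]
      abel
    rw [expand]
    have h2 : (θ * W)ᵀ * K * θ = W * (V * D * Vᵀ) := by
      rw [Matrix.transpose_mul, hWt]
      calc W * θᵀ * K * θ = W * (θᵀ * K * θ) := by simp only [Matrix.mul_assoc]
          _ = W * (V * D * Vᵀ) := by rw [hSVD]
    have h3 : θᵀ * K * (θ * W) = (V * D * Vᵀ) * W := by
      calc θᵀ * K * (θ * W) = (θᵀ * K * θ) * W := by simp only [Matrix.mul_assoc]
          _ = (V * D * Vᵀ) * W := by rw [hSVD]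
    rw [h2, h3, hθW, hSVD, hWdef]
    rw [hcollapse, hcollapse, hcollapse]
    simp only [Matrix.mul_sub, Matrix.sub_mul, Matrix.mul_smul, Matrix.smul_mul,
      Matrix.mul_add, Matrix.add_mul, Matrix.mul_assoc, smul_sub, smul_add]
  rw [hupd, key]
  congr 1
  congr 1
  -- now an equality of diagonal k×k matrices
  ext i j
  by_cases h : i = j
  · subst h
    simp only [hNdef, hD, Matrix.diagonal_mul_diagonal, Matrix.smul_apply,
      Matrix.sub_apply, Matrix.add_apply, Matrix.diagonal_apply_eq, smul_eq_mul, hn]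
    by_cases hiz : i = z
    · subst hiz
      simp only [if_pos rfl, hc, eq_self_iff_true, ite_true, if_true]
      ring
    · simp only [if_neg hiz, hc]
      ring
  · simp [hNdef, hD, Matrix.diagonal_apply_ne _ h, h]
end
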